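/- Let B = ⟨a, b ∣ a b a⁻¹ b = 1⟩ be the Klein bottle group, let A be the subgroup of B generated by a² and b, let G be a torsion-free group, and let f : B → G be a group homomorphism with nontrivial kernel. Then the kernel of f meets A nontrivially, i.e. there exists x ∈ A with x ≠ 1 and f(x) = 1. -/

import Mathlib

/-- The single relator `a * b * a⁻¹ * b` of the Klein bottle group,
where `a = FreeGroup.of 0` and `b = FreeGroup.of 1`. -/
def kleinBottleRels : Set (FreeGroup (Fin 2)) :=
  {FreeGroup.of 0 * FreeGroup.of 1 * (FreeGroup.of 0)⁻¹ * FreeGroup.of 1}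

/-- The Klein bottle group `B = ⟨a, b ∣ a b a⁻¹ b = 1⟩`. -/
abbrev KleinBottleGroup : Type := PresentedGroup kleinBottleRels

/-- The generator `a` of the Klein bottle group. -/
def kleinA : KleinBottleGroup := PresentedGroup.of 0

/-- The generator `b` of the Klein bottle group. -/
def kleinB : KleinBottleGroup := PresentedGroup.of 1

/-- The index-two subgroup `A = ⟨a², b⟩` of the Klein bottle group. -/
def kleinTorusSubgroup : Subgroup KleinBottleGroup :=
  Subgroup.closure {kleinA ^ 2, kleinB}

/-!
Every `x ∉ A` lies in the coset `A a`, so `x² ∈ A`. The exponent sum of `a` is even on `A`,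
hence odd at `x`, and therefore `x² ≠ 1`. Since `f (x²) = f x ^ 2 = 1`, the element `x²`
is a nontrivial element of `ker f ∩ A`.
-/

namespace Subgroup

variable {H : Type*} [Group H] {K : Subgroup H} {t : H}

theorem sq_mem_of_mul_inv_mem (hconj : ∀ k ∈ K, t * k * t⁻¹ ∈ K) (ht : t ^ 2 ∈ K) {x : H}
    (hx : x * t⁻¹ ∈ K) : x ^ 2 ∈ K := by
  have hsq : x ^ 2 = x * t⁻¹ * (t * (x * t⁻¹) * t⁻¹) * t ^ 2 := by rw [sq, sq]; group
  rw [hsq]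
  exact K.mul_mem (K.mul_mem hx (hconj _ hx)) ht

theorem mem_or_mul_inv_mem (hconj : ∀ k ∈ K, t * k * t⁻¹ ∈ K) (ht : t ^ 2 ∈ K)
    (hgen : closure (insert t (K : Set H)) = ⊤) (x : H) : x ∈ K ∨ x * t⁻¹ ∈ K := by
  have hx : x ∈ closure (insert t (K : Set H)) := hgen ▸ mem_top x
  induction hx using closure_induction with
  | mem y hy =>
    rcases hy with rfl | hy
    · exact Or.inr (by simp)
    · exact Or.inl hy
  | one => exact Or.inl K.one_mem
  | mul y z _ _ hy hz =>
    rcases hy with hy | hy <;> rcases hz with hz | hz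
    · exact Or.inl (K.mul_mem hy hz)
    · exact Or.inr (by simpa only [mul_assoc] using K.mul_mem hy hz)
    · refine Or.inr ?_
      have hyz : y * z * t⁻¹ = y * t⁻¹ * (t * z * t⁻¹) := by group
      exact hyz ▸ K.mul_mem hy (hconj z hz)
    · refine Or.inl ?_
      have hyz : y * z = y * t⁻¹ * (t * (z * t⁻¹) * t⁻¹) * t ^ 2 := by group
      exact hyz ▸ K.mul_mem (K.mul_mem hy (hconj _ hz)) ht
  | inv y _ hy =>
    rcases hy with hy | hy
    · exact Or.inl (K.inv_mem hy)
    · refine Or.inr ?_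
      have hy' : y⁻¹ * t⁻¹ = (t ^ 2)⁻¹ * (t * (y * t⁻¹)⁻¹ * t⁻¹) := by group
      exact hy' ▸ K.mul_mem (K.inv_mem ht) (hconj _ (K.inv_mem hy))

end Subgroup

theorem kleinA_mul_kleinB_mul_inv : kleinA * kleinB * kleinA⁻¹ = kleinB⁻¹ :=
  eq_inv_of_mul_eq_one_left (PresentedGroup.one_of_mem rfl)

theorem kleinA_sq_mem : kleinA ^ 2 ∈ kleinTorusSubgroup :=
  Subgroup.subset_closure (Set.mem_insert _ _)

theorem kleinB_mem : kleinB ∈ kleinTorusSubgroup :=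
  Subgroup.subset_closure (Set.mem_insert_of_mem _ rfl)

theorem kleinA_conj_mem :
    ∀ g ∈ kleinTorusSubgroup, kleinA * g * kleinA⁻¹ ∈ kleinTorusSubgroup := by
  suffices kleinTorusSubgroup ≤ kleinTorusSubgroup.comap (MulAut.conj kleinA).toMonoidHom from
    fun _ hg => this hg
  refine Subgroup.closure_le _ |>.2 (Set.insert_subset_iff.2
    ⟨?_, Set.singleton_subset_iff.2 ?_⟩)
  · show kleinA * kleinA ^ 2 * kleinA⁻¹ ∈ kleinTorusSubgroup
    simpa [pow_succ, mul_assoc] using kleinA_sq_mem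
  · show kleinA * kleinB * kleinA⁻¹ ∈ kleinTorusSubgroup
    exact kleinA_mul_kleinB_mul_inv ▸ kleinTorusSubgroup.inv_mem kleinB_mem

theorem closure_insert_kleinA_eq_top :
    Subgroup.closure (insert kleinA (kleinTorusSubgroup : Set KleinBottleGroup)) = ⊤ := by
  refine eq_top_iff.2 fun x _ => PresentedGroup.generated_by _ _ (fun j => ?_) x
  fin_cases j
  · exact Subgroup.subset_closure (Set.mem_insert _ _)
  · exact Subgroup.subset_closure (Set.mem_insert_of_mem _ kleinB_mem)

/-- The exponent sum of `a`, a homomorphism `B → ℤ`. -/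
def kleinExpSumA : KleinBottleGroup →* Multiplicative ℤ :=
  PresentedGroup.toGroup (f := fun i => if i = 0 then Multiplicative.ofAdd 1 else 1) (by
    rintro r rfl
    simp)

@[simp]
theorem kleinExpSumA_kleinA : kleinExpSumA kleinA = Multiplicative.ofAdd 1 :=
  PresentedGroup.toGroup.of _

@[simp]
theorem kleinExpSumA_kleinB : kleinExpSumA kleinB = 1 :=
  PresentedGroup.toGroup.of _

theorem even_kleinExpSumA_of_mem {g : KleinBottleGroup} (hg : g ∈ kleinTorusSubgroup) :
    Even (kleinExpSumA g).toAdd := by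
  induction hg using Subgroup.closure_induction with
  | mem x hx =>
    rcases hx with rfl | rfl <;> simp
  | one => simp
  | mul x y _ _ hx hy => simpa using hx.add hy
  | inv x _ hx => simpa using hx.neg

theorem sq_ne_one_of_mul_kleinA_inv_mem {x : KleinBottleGroup}
    (hx : x * kleinA⁻¹ ∈ kleinTorusSubgroup) : x ^ 2 ≠ 1 := by
  have hodd : Odd (kleinExpSumA x).toAdd := by
    simpa using (even_kleinExpSumA_of_mem hx).add_one
  intro hsq
  have h2 : 2 * (kleinExpSumA x).toAdd = 0 := by
    simpa [two_mul] using congrArg (fun y => (kleinExpSumA y).toAdd) hsq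
  obtain ⟨k, hk⟩ := hodd
  omega

theorem kleinBottle_ker_meets_A_general {G : Type*} [Group G]
    (f : KleinBottleGroup →* G)
    (hf : ∃ x : KleinBottleGroup, x ≠ 1 ∧ f x = 1) :
    ∃ x ∈ kleinTorusSubgroup, x ≠ 1 ∧ f x = 1 := by
  obtain ⟨x, hx1, hfx⟩ := hf
  rcases Subgroup.mem_or_mul_inv_mem kleinA_conj_mem kleinA_sq_mem
    closure_insert_kleinA_eq_top x with hA | hA
  · exact ⟨x, hA, hx1, hfx⟩
  · refine ⟨x ^ 2, Subgroup.sq_mem_of_mul_inv_mem kleinA_conj_mem kleinA_sq_mem hA,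
      sq_ne_one_of_mul_kleinA_inv_mem hA, ?_⟩
    rw [map_pow, hfx, one_pow]

/-- If `G` is torsion-free and `f : B → G` has nontrivial kernel, then the kernel
of `f` meets the subgroup `A = ⟨a², b⟩` nontrivially. -/
theorem kleinBottle_ker_meets_A {G : Type*} [Group G]
    (hG : ∀ g : G, ∀ n : ℕ, 0 < n → g ^ n = 1 → g = 1)
    (f : KleinBottleGroup →* G)
    (hf : ∃ x : KleinBottleGroup, x ≠ 1 ∧ f x = 1) :
    ∃ x ∈ kleinTorusSubgroup, x ≠ 1 ∧ f x = 1 :=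
  kleinBottle_ker_meets_A_general f hf
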